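/- arXiv:2208.01601 — 7 statements merged into one kernel-verified Lean document; each statement's English description precedes it below -/
import Mathlib

section
/- Let q be a prime power, r a positive integer, and A(X) ∈ F_{q²}[X]. Then the polynomial f(X) = X^r · A(X^{q-1}) permutes F_{q²} if and only if gcd(r, q-1) = 1 and the function g(x) = x^r · A(x)^{q-1} permutes the group μ_{q+1} of (q+1)-th roots of unity in F_{q²}. -/
/-!
Write `f c = c ^ r * A(c ^ k)` and `g x = x ^ r * A(x) ^ k`, where `F` has `k * l + 1` elements.
The map `π c = c ^ k` sends `Fˣ` onto `μ_l`, its fibres are the cosets of `μ_k`, and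
`f (u * c) = u ^ r * f c` for `u ∈ μ_k`, while `π ∘ f = g ∘ π`. So `f` permutes `F` exactly when it
is injective on each fibre, i.e. `u ↦ u ^ r` is injective on `μ_k` (equivalently
`gcd(r, k) = 1`), and the fibres are permuted, i.e. `g` permutes `μ_l`.
-/

open Function Polynomial Set

section Field

variable {F : Type*} [Field F] {r k : ℕ} (A : F[X])

theorem pow_mul_eval_pow_pow (c : F) :
    (c ^ r * A.eval (c ^ k)) ^ k = (c ^ k) ^ r * A.eval (c ^ k) ^ k := by
  rw [mul_pow, pow_right_comm]

theorem mul_pow_mul_eval_pow {u : F} (hu : u ^ k = 1) (c : F) :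
    (u * c) ^ r * A.eval ((u * c) ^ k) = u ^ r * (c ^ r * A.eval (c ^ k)) := by
  rw [mul_pow, mul_pow, hu, one_mul, mul_assoc]

end Field

namespace FiniteField

variable {F : Type*} [Field F] [Fintype F]

theorem exists_isPrimitiveRoot_of_dvd {d : ℕ} (hd : d ∣ Fintype.card F - 1) :
    ∃ ζ : F, IsPrimitiveRoot ζ d := by
  obtain ⟨g, hg⟩ := IsCyclic.exists_ofOrder_eq_natCard (α := Fˣ)
  rw [Nat.card_units, Nat.card_eq_fintype_card] at hg
  obtain ⟨e, he⟩ := hd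
  have hζ : IsPrimitiveRoot (g : F) (Fintype.card F - 1) :=
    IsPrimitiveRoot.coe_units_iff.mpr (hg ▸ IsPrimitiveRoot.orderOf g)
  exact ⟨_, hζ.pow (by simp [Fintype.one_lt_card]) (he.trans (mul_comm d e))⟩

variable {k l : ℕ} (hcard : Fintype.card F = k * l + 1)
include hcard

theorem mul_ne_zero_of_card_eq : k * l ≠ 0 := by
  have := Fintype.one_lt_card (α := F)
  omega

theorem pow_pow_eq_one {c : F} (hc : c ≠ 0) : (c ^ k) ^ l = 1 := by
  rw [← pow_mul, ← FiniteField.pow_card_sub_one_eq_one c hc, hcard, Nat.add_sub_cancel]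

theorem exists_pow_eq_of_pow_eq_one {x : F} (hx : x ^ l = 1) : ∃ c ≠ 0, c ^ k = x := by
  have hkl := mul_ne_zero_of_card_eq hcard
  obtain ⟨ζ, hζ⟩ := exists_isPrimitiveRoot_of_dvd (F := F) (d := k * l) (by simp [hcard])
  have : NeZero l := ⟨right_ne_zero_of_mul hkl⟩
  obtain ⟨i, -, hi⟩ := (hζ.pow (Nat.pos_of_ne_zero hkl) rfl).eq_pow_of_pow_eq_one hx
  exact ⟨ζ ^ i, pow_ne_zero _ (hζ.ne_zero hkl), by rw [← hi, pow_right_comm]⟩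

end FiniteField

open FiniteField

section PermutationCriterion

variable {F : Type*} [Field F] [Fintype F] {r k l : ℕ} {A : F[X]}

/-- A primitive `gcd(r, k)`-th root of unity `ζ` satisfies `f ζ = f 1`. -/
theorem gcd_eq_one_of_bijective (hk : k ∣ Fintype.card F - 1)
    (hf : Bijective fun c : F => c ^ r * A.eval (c ^ k)) : r.gcd k = 1 := by
  obtain ⟨ζ, hζ⟩ := exists_isPrimitiveRoot_of_dvd ((Nat.gcd_dvd_right r k).trans hk)
  obtain ⟨hζr, hζk⟩ := pow_gcd_eq_one.mp hζ.pow_eq_one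
  have hfζ : ζ ^ r * A.eval (ζ ^ k) = 1 ^ r * A.eval (1 ^ k) := by
    simpa [hζr] using mul_pow_mul_eval_pow (r := r) A hζk 1
  have hζ1 : ζ = 1 := hf.injective hfζ
  exact (hζ1 ▸ hζ).unique IsPrimitiveRoot.one

variable (hcard : Fintype.card F = k * l + 1) (hr : r ≠ 0)
include hcard hr

theorem bijOn_of_bijective (hf : Bijective fun c : F => c ^ r * A.eval (c ^ k)) :
    BijOn (fun x : F => x ^ r * A.eval x ^ k) {x | x ^ l = 1} {x | x ^ l = 1} := by
  have hf_ne : ∀ c : F, c ≠ 0 → c ^ r * A.eval (c ^ k) ≠ 0 := fun c hc h0 =>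
    hc (hf.injective (h0.trans (by simp [zero_pow hr])))
  have hmaps : MapsTo (fun x : F => x ^ r * A.eval x ^ k) {x | x ^ l = 1} {x | x ^ l = 1} := by
    rintro x hx
    obtain ⟨c, hc, rfl⟩ := exists_pow_eq_of_pow_eq_one hcard hx
    simpa only [mem_ofPred_eq, ← pow_mul_eval_pow_pow] using pow_pow_eq_one hcard (hf_ne c hc)
  refine ((toFinite _).surjOn_iff_bijOn_of_mapsTo hmaps).mp fun y hy => ?_
  obtain ⟨d, hd, rfl⟩ := exists_pow_eq_of_pow_eq_one hcard hy
  obtain ⟨c, rfl⟩ := hf.surjective d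
  have hc : c ≠ 0 := by rintro rfl; simp [zero_pow hr] at hd
  exact ⟨c ^ k, pow_pow_eq_one hcard hc, (pow_mul_eval_pow_pow A c).symm⟩

theorem injective_of_bijOn (hgcd : r.gcd k = 1)
    (hg : BijOn (fun x : F => x ^ r * A.eval x ^ k) {x | x ^ l = 1} {x | x ^ l = 1}) :
    Injective fun c : F => c ^ r * A.eval (c ^ k) := by
  have hkl := mul_ne_zero_of_card_eq hcard
  have hf_ne : ∀ c : F, c ≠ 0 → c ^ r * A.eval (c ^ k) ≠ 0 := fun c hc h0 => by
    have hgc := hg.mapsTo (pow_pow_eq_one hcard hc)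
    simp [← pow_mul_eval_pow_pow, h0, zero_pow (left_ne_zero_of_mul hkl),
      zero_pow (right_ne_zero_of_mul hkl)] at hgc
  have hf0 : (0 : F) ^ r * A.eval (0 ^ k) = 0 := by simp [zero_pow hr]
  intro c d (hcd : c ^ r * A.eval (c ^ k) = d ^ r * A.eval (d ^ k))
  rcases eq_or_ne c 0 with rfl | hc
  · by_contra hd
    exact hf_ne d (Ne.symm hd) (hcd.symm.trans hf0)
  rcases eq_or_ne d 0 with rfl | hd
  · exact absurd (hcd.trans hf0) (hf_ne c hc)
  -- `u = c / d` lies in `μ_k`, and `f c = u ^ r * f d` forces `u ^ r = 1`.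
  have hck : c ^ k = d ^ k := hg.injOn (pow_pow_eq_one hcard hc) (pow_pow_eq_one hcard hd) <| by
    simp only [← pow_mul_eval_pow_pow, hcd]
  have huk : (c / d) ^ k = 1 := by rw [div_pow, hck, div_self (pow_ne_zero _ hd)]
  have hcu : c = c / d * d := (div_mul_cancel₀ c hd).symm
  have hur : (c / d) ^ r = 1 := by
    refine (mul_eq_right₀ (hf_ne d hd)).mp ?_
    rw [← mul_pow_mul_eval_pow A huk, ← hcu, hcd]
  have hu : c / d = 1 := by simpa [hgcd] using pow_gcd_eq_one.mpr ⟨hur, huk⟩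
  rw [hcu, hu, one_mul]

theorem bijective_pow_mul_eval_pow_iff :
    Bijective (fun c : F => c ^ r * A.eval (c ^ k)) ↔
      r.gcd k = 1 ∧ BijOn (fun x : F => x ^ r * A.eval x ^ k) {x | x ^ l = 1} {x | x ^ l = 1} :=
  ⟨fun hf => ⟨gcd_eq_one_of_bijective ⟨l, by simp [hcard]⟩ hf, bijOn_of_bijective hcard hr hf⟩,
    fun ⟨hgcd, hg⟩ => Finite.injective_iff_bijective.mp (injective_of_bijOn hcard hr hgcd hg)⟩

end PermutationCriterion

theorem stmt_0_general (q : ℕ)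
    (F : Type) [Field F] [Fintype F] (hF : Fintype.card F = q ^ 2)
    (r : ℕ) (hr : 0 < r) (A : Polynomial F) :
    Function.Bijective (fun c : F => c ^ r * A.eval (c ^ (q - 1))) ↔
      Nat.gcd r (q - 1) = 1 ∧
        Set.BijOn (fun x : F => x ^ r * A.eval x ^ (q - 1))
          {x : F | x ^ (q + 1) = 1} {x : F | x ^ (q + 1) = 1} := by
  obtain ⟨n, rfl⟩ : ∃ n, q = n + 1 := by
    refine Nat.exists_eq_add_one.mpr (Nat.pos_of_ne_zero ?_)
    rintro rfl
    simp at hF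
  refine bijective_pow_mul_eval_pow_iff ?_ hr.ne'
  rw [hF, Nat.add_sub_cancel]
  ring

/-- Lemma 1 (special case of Zieve's Lemma 1.2): `X^r A(X^{q-1})` permutes `F_{q²}`
iff `gcd(r, q-1) = 1` and `x ↦ x^r A(x)^{q-1}` permutes `μ_{q+1}`. -/
theorem stmt_0 (q : ℕ) (hq : ∃ p n : ℕ, p.Prime ∧ 0 < n ∧ q = p ^ n)
    (F : Type) [Field F] [Fintype F] (hF : Fintype.card F = q ^ 2)
    (r : ℕ) (hr : 0 < r) (A : Polynomial F) :
    Function.Bijective (fun c : F => c ^ r * A.eval (c ^ (q - 1))) ↔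
      Nat.gcd r (q - 1) = 1 ∧
        Set.BijOn (fun x : F => x ^ r * A.eval x ^ (q - 1))
          {x : F | x ^ (q + 1) = 1} {x : F | x ^ (q + 1) = 1} :=
  stmt_0_general q F hF r hr A
end

section
/- Let q be a prime power, r an integer, and s, t positive integers with gcd(s+1, q) = 1 and gcd((q+1)/gcd(t, q+1), s+1) = 1. Let A(X) ∈ F_{q²}[X] and B(X) := A(X) · (1 + X^t + X^{2t} + ... + X^{st}). Then x ↦ x^r · B(x)^{q-1} permutes μ_{q+1} if and only if x ↦ x^{r - st} · A(x)^{q-1} permutes μ_{q+1}. -/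
/-!
For `x ∈ μ_{q+1}` put `y = x^t` and `S = 1 + y + ⋯ + y^s`. Since `x^q = x⁻¹`, the Frobenius
gives `S^q = y^{-s} S`, and `S ≠ 0`: if `y = 1` then `S = s + 1`, prime to the characteristic;
otherwise `S (y - 1) = y^{s+1} - 1`, and `y^{s+1} = 1` would force `y = 1` by the gcd condition.
Hence `S(x)^{q-1} = x^{-st}`, so the two maps coincide on `μ_{q+1}`.
-/

open Finset Polynomial

theorem Nat.gcd_mul_dvd_of_coprime_div_gcd {k m n : ℕ} (h : Coprime (n / gcd k n) m) :
    gcd (m * k) n ∣ k := by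
  obtain ⟨k', n', hkn, hk, hn⟩ := Nat.exists_coprime k n
  set g := gcd k n
  rcases g.eq_zero_or_pos with hg | hg
  · simp [hk, hg]
  have hn' : n / g = n' := by rw [hn, Nat.mul_div_cancel _ hg]
  rw [hn', coprime_comm] at h
  rw [hk, hn, ← mul_assoc, gcd_mul_right, Coprime.gcd_eq_one (h.mul_left hkn), one_mul]
  exact Dvd.intro_left k' rfl

theorem pow_eq_one_of_pow_mul_eq_one_of_coprime {M : Type*} [Monoid M] {x : M} {k m n : ℕ}
    (hn : x ^ n = 1) (hmk : x ^ (m * k) = 1) (h : Nat.Coprime (n / Nat.gcd k n) m) :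
    x ^ k = 1 := by
  obtain ⟨c, hc⟩ := Nat.gcd_mul_dvd_of_coprime_div_gcd h
  rw [hc, pow_mul, pow_gcd_eq_one.2 ⟨hmk, hn⟩, one_pow]

theorem geom_sum_ne_zero_of_pow_eq_one_imp {F : Type*} [Field F] {y : F} {m : ℕ}
    (hm : (m : F) ≠ 0) (hy : y ^ m = 1 → y = 1) : ∑ i ∈ range m, y ^ i ≠ 0 := by
  by_cases h1 : y = 1
  · simpa [h1] using hm
  rw [geom_sum_eq h1]
  exact div_ne_zero (sub_ne_zero.2 (mt hy h1)) (sub_ne_zero.2 h1)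

theorem pow_mul_geom_sum_pow_eq_geom_sum {R : Type*} [CommSemiring R] {y : R} {q : ℕ}
    (hy : y ^ (q + 1) = 1) (s : ℕ) :
    y ^ s * ∑ j ∈ range (s + 1), (y ^ j) ^ q = ∑ j ∈ range (s + 1), y ^ j := by
  rw [mul_sum]
  conv_rhs => rw [← sum_range_reflect]
  refine sum_congr rfl fun j hj => ?_
  obtain ⟨d, rfl⟩ := Nat.exists_eq_add_of_le (Nat.lt_succ_iff.1 (mem_range.1 hj))
  rw [show j + d + 1 - 1 - j = d by omega, pow_add, mul_right_comm, ← pow_succ', ← pow_mul,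
    mul_comm j, pow_mul, hy, one_pow, one_mul]

theorem pow_mul_geom_sum_pow_pred_eq_one {F : Type*} [Field F] {p : ℕ} [Fact p.Prime] [CharP F p]
    {n : ℕ} {y : F} (hy : y ^ (p ^ n + 1) = 1) {s : ℕ} (hS : ∑ j ∈ range (s + 1), y ^ j ≠ 0) :
    y ^ s * (∑ j ∈ range (s + 1), y ^ j) ^ (p ^ n - 1) = 1 := by
  refine mul_right_cancel₀ hS ?_
  rw [mul_assoc, ← pow_succ, Nat.sub_add_cancel (Nat.one_le_pow _ _ (Fact.out : p.Prime).pos),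
    sum_pow_char_pow, pow_mul_geom_sum_pow_eq_geom_sum hy, one_mul]

theorem stmt_1_general (q : ℕ) (hq : ∃ p n : ℕ, p.Prime ∧ 0 < n ∧ q = p ^ n)
    (F : Type) [Field F] [Fintype F] (hF : Fintype.card F = q ^ 2)
    (r : ℤ) (s t : ℕ)
    (h1 : Nat.gcd (s + 1) q = 1)
    (h2 : Nat.gcd ((q + 1) / Nat.gcd t (q + 1)) (s + 1) = 1)
    (A B : Polynomial F)
    (hB : B = A * ∑ j ∈ Finset.range (s + 1), Polynomial.X ^ (j * t)) :
    Set.BijOn (fun x : F => x ^ r * B.eval x ^ (q - 1))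
        {x : F | x ^ (q + 1) = 1} {x : F | x ^ (q + 1) = 1} ↔
      Set.BijOn (fun x : F => x ^ (r - (s * t : ℕ)) * A.eval x ^ (q - 1))
        {x : F | x ^ (q + 1) = 1} {x : F | x ^ (q + 1) = 1} := by
  obtain ⟨p, n, hp, hn, rfl⟩ := hq
  have := Fact.mk hp
  have : CharP F p := charP_of_card_eq_prime_pow (f := n * 2) (by rw [hF, pow_mul])
  have hs1 : ((s + 1 : ℕ) : F) ≠ 0 := fun h0 =>
    hp.one_lt.ne' <| Nat.eq_one_of_dvd_one <|
      h1 ▸ Nat.dvd_gcd ((CharP.cast_eq_zero_iff F p _).1 h0) (dvd_pow_self p hn.ne')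
  refine Set.EqOn.bijOn_iff fun x (hx : x ^ (p ^ n + 1) = 1) => ?_
  have hx0 : x ≠ 0 := by rintro rfl; simp at hx
  have hy : (x ^ t) ^ (p ^ n + 1) = 1 := by rw [← pow_mul, mul_comm, pow_mul, hx, one_pow]
  have hS := geom_sum_ne_zero_of_pow_eq_one_imp hs1 fun hyt =>
    pow_eq_one_of_pow_mul_eq_one_of_coprime hx (by rwa [pow_mul']) h2
  have hSinv := eq_inv_of_mul_eq_one_right (pow_mul_geom_sum_pow_pred_eq_one hy hS)
  have hBx : B.eval x = A.eval x * ∑ j ∈ range (s + 1), (x ^ t) ^ j := by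
    simp [hB, eval_finsetSum, pow_mul']
  show x ^ r * B.eval x ^ _ = x ^ (r - (s * t : ℕ)) * A.eval x ^ _
  rw [hBx, mul_pow, hSinv, zpow_sub₀ hx0, zpow_natCast, mul_comm s t, pow_mul, div_eq_mul_inv]
  ring

/-- Lemma 2: with `B(X) = A(X)·(1 + X^t + ⋯ + X^{st})`, the map `x ↦ x^r B(x)^{q-1}`
permutes `μ_{q+1}` iff `x ↦ x^{r-st} A(x)^{q-1}` does. -/
theorem stmt_1 (q : ℕ) (hq : ∃ p n : ℕ, p.Prime ∧ 0 < n ∧ q = p ^ n)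
    (F : Type) [Field F] [Fintype F] (hF : Fintype.card F = q ^ 2)
    (r : ℤ) (s t : ℕ) (hs : 0 < s) (ht : 0 < t)
    (h1 : Nat.gcd (s + 1) q = 1)
    (h2 : Nat.gcd ((q + 1) / Nat.gcd t (q + 1)) (s + 1) = 1)
    (A B : Polynomial F)
    (hB : B = A * ∑ j ∈ Finset.range (s + 1), Polynomial.X ^ (j * t)) :
    Set.BijOn (fun x : F => x ^ r * B.eval x ^ (q - 1))
        {x : F | x ^ (q + 1) = 1} {x : F | x ^ (q + 1) = 1} ↔
      Set.BijOn (fun x : F => x ^ (r - (s * t : ℕ)) * A.eval x ^ (q - 1))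
        {x : F | x ^ (q + 1) = 1} {x : F | x ^ (q + 1) = 1} :=
  stmt_1_general q hq F hF r s t h1 h2 A B hB
end

section
/- Let q be a prime power, r an integer, s and t positive integers such that gcd(s+1, q) = 1 and gcd((q+1)/gcd(t, q+1), s+1) = 1. If x ↦ x^{r-st} · A(x)^{q-1} permutes μ_{q+1}, where A ∈ F_{q²}[X], then x ↦ x^r · (A(x) · ∑_{j=0}^{s} x^{jt})^{q-1} permutes μ_{q+1}. -/
/-!
On `μ_{q+1}` the Frobenius `x ↦ x^q` is inversion, so for `y = x^t` the sum
`S = ∑_{j ≤ s} y^j` satisfies `S^q = ∑ y^{-j} = y^{-s} S`. The hypotheses on `gcd`s make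
`S ≠ 0` on `μ_{q+1}`, hence `S^{q-1} = x^{-st}` there, and the two maps coincide on `μ_{q+1}`.
-/

open Finset

section GeomSum

variable {K : Type*} [Field K]

theorem geom_sum_ne_zero_of_pow_eq_one_of_coprime {y : K} {m n : ℕ} (hy : y ^ m = 1)
    (hmn : m.Coprime n) (hn : (n : K) ≠ 0) : ∑ j ∈ range n, y ^ j ≠ 0 := by
  intro hsum
  have hyn : y ^ n = 1 := by
    have h := geom_sum_mul y n
    rw [hsum, zero_mul] at h
    exact sub_eq_zero.mp h.symm
  obtain rfl : y = 1 := (pow_eq_one_iff_of_coprime hmn).mp ⟨hy, hyn⟩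
  simp only [one_pow, sum_const, card_range, nsmul_eq_mul, mul_one] at hsum
  exact hn hsum

theorem pow_mul_geom_sum_inv {y : K} (hy : y ≠ 0) (s : ℕ) :
    y ^ s * ∑ j ∈ range (s + 1), y⁻¹ ^ j = ∑ j ∈ range (s + 1), y ^ j := by
  rw [mul_sum, ← sum_range_reflect (fun j => y ^ j)]
  refine sum_congr rfl fun j hj => ?_
  have hjs : j ≤ s := Nat.lt_succ_iff.mp (mem_range.mp hj)
  rw [inv_pow, ← pow_sub₀ _ hy hjs, Nat.add_sub_cancel]

theorem geom_sum_pow_sub_one_eq_inv_pow {p n s : ℕ} [ExpChar K p] {y : K}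
    (hy : y ^ (p ^ n + 1) = 1) (hS : ∑ j ∈ range (s + 1), y ^ j ≠ 0) :
    (∑ j ∈ range (s + 1), y ^ j) ^ (p ^ n - 1) = (y ^ s)⁻¹ := by
  have hy0 : y ≠ 0 := by rintro rfl; simp at hy
  have hyq : y ^ p ^ n = y⁻¹ := eq_inv_of_mul_eq_one_left (by rw [← pow_succ, hy])
  have hfrob : (∑ j ∈ range (s + 1), y ^ j) ^ p ^ n = ∑ j ∈ range (s + 1), y⁻¹ ^ j := by
    rw [sum_pow_char_pow]
    exact sum_congr rfl fun j _ => by rw [← pow_mul, mul_comm, pow_mul, hyq]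
  rw [pow_sub₀ _ hS (Nat.one_le_pow _ _ (expChar_pos K p)), hfrob, pow_one,
    mul_inv_eq_iff_eq_mul₀ hS, ← pow_mul_geom_sum_inv hy0 s,
    inv_mul_cancel_left₀ (pow_ne_zero s hy0)]

end GeomSum

theorem pow_pow_div_gcd_eq_one {M : Type*} [Monoid M] {x : M} {k : ℕ} (hx : x ^ k = 1)
    (t : ℕ) : (x ^ t) ^ (k / t.gcd k) = 1 := by
  rw [← pow_mul, ← Nat.mul_div_assoc _ (Nat.gcd_dvd_right t k),
    ← Nat.div_mul_right_comm (Nat.gcd_dvd_left t k), pow_mul', hx, one_pow]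

theorem stmt_2_general (q : ℕ) (hq : ∃ p n : ℕ, p.Prime ∧ 0 < n ∧ q = p ^ n)
    (F : Type) [Field F] [Fintype F] (hF : Fintype.card F = q ^ 2)
    (r : ℤ) (s t : ℕ)
    (h1 : Nat.gcd (s + 1) q = 1)
    (h2 : Nat.gcd ((q + 1) / Nat.gcd t (q + 1)) (s + 1) = 1)
    (A : Polynomial F)
    (hA : Set.BijOn (fun x : F => x ^ (r - (s * t : ℕ)) * A.eval x ^ (q - 1))
      {x : F | x ^ (q + 1) = 1} {x : F | x ^ (q + 1) = 1}) :
    Set.BijOn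
      (fun x : F => x ^ r * (A.eval x * ∑ j ∈ Finset.range (s + 1), x ^ (j * t)) ^ (q - 1))
      {x : F | x ^ (q + 1) = 1} {x : F | x ^ (q + 1) = 1} := by
  obtain ⟨p, n, hp, hn, rfl⟩ := hq
  have : Fact p.Prime := ⟨hp⟩
  have : CharP F p := charP_of_card_eq_prime_pow (by rw [hF, ← pow_mul])
  have hs1 : ((s + 1 : ℕ) : F) ≠ 0 := by
    rw [Ne, CharP.cast_eq_zero_iff F p]
    intro hps
    exact hp.one_lt.ne' (Nat.dvd_one.mp (h1 ▸ Nat.dvd_gcd hps (dvd_pow_self p hn.ne')))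
  refine hA.congr fun x (hx : x ^ (p ^ n + 1) = 1) => ?_
  have hy : (x ^ t) ^ (p ^ n + 1) = 1 := by rw [← pow_mul, mul_comm, pow_mul, hx, one_pow]
  have hS := geom_sum_ne_zero_of_pow_eq_one_of_coprime (pow_pow_div_gcd_eq_one hx t) h2 hs1
  have hx0 : x ≠ 0 := by rintro rfl; simp at hx
  simp only [mul_comm _ t, pow_mul]
  rw [mul_pow, geom_sum_pow_sub_one_eq_inv_pow hy hS, zpow_sub₀ hx0, zpow_natCast, pow_mul,
    div_eq_mul_inv]
  ring

/-- One direction of Lemma 2: if `x ↦ x^{r-st} A(x)^{q-1}` permutes `μ_{q+1}` then so does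
`x ↦ x^r (A(x)·∑_{j=0}^{s} x^{jt})^{q-1}`. -/
theorem stmt_2 (q : ℕ) (hq : ∃ p n : ℕ, p.Prime ∧ 0 < n ∧ q = p ^ n)
    (F : Type) [Field F] [Fintype F] (hF : Fintype.card F = q ^ 2)
    (r : ℤ) (s t : ℕ) (hs : 0 < s) (ht : 0 < t)
    (h1 : Nat.gcd (s + 1) q = 1)
    (h2 : Nat.gcd ((q + 1) / Nat.gcd t (q + 1)) (s + 1) = 1)
    (A : Polynomial F)
    (hA : Set.BijOn (fun x : F => x ^ (r - (s * t : ℕ)) * A.eval x ^ (q - 1))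
      {x : F | x ^ (q + 1) = 1} {x : F | x ^ (q + 1) = 1}) :
    Set.BijOn
      (fun x : F => x ^ r * (A.eval x * ∑ j ∈ Finset.range (s + 1), x ^ (j * t)) ^ (q - 1))
      {x : F | x ^ (q + 1) = 1} {x : F | x ^ (q + 1) = 1} :=
  stmt_2_general q hq F hF r s t h1 h2 A hA
end

section
/- Let q be a prime power, and suppose v ∈ ℤ and D(X) ∈ F_{q²}[X] are such that x ↦ x^v · D(x)^{q-1} permutes μ_{q+1}. Let s, t be positive integers with gcd(s+1, q) = 1 and gcd((q+1)/gcd(t, q+1), s+1) = 1. Suppose B(X) ∈ F_{q²}[X] satisfies D(X) = B(X) · ∑_{j=0}^{s} X^{jt}. If r is a positive integer with gcd(r, q-1) = 1 and r ≡ v - st (mod q+1), then X^r · B(X^{q-1}) permutes F_{q²}. -/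
/-! On `μ_{q+1}` the sum `S(x) = ∑_{j ≤ s} (x^t)^j` does not vanish: if it did, `x^t` would have
order dividing both `s + 1` and `(q + 1)/gcd(t, q + 1)`, so `x^t = 1` and `S(x) = s + 1 ≠ 0`.
Since `x^q = x⁻¹` there, Frobenius sends `S(x)` to `x^{-st} S(x)`, so `S(x)^{q-1} = x^{-st}` and
`x^r B(x)^{q-1} = x^v D(x)^{q-1}` on `μ_{q+1}`. Now `c ↦ c^r h(c^d)` permutes a field with `de + 1`
elements once `gcd(r, d) = 1` and `g : x ↦ x^r h(x)^d` permutes `μ_e`: `(c^r h(c^d))^d = g(c^d)`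
recovers `c^d`, then `c^r`, and these two powers determine `c`. -/

open Finset Polynomial

theorem zpow_eq_zpow_of_modEq₀ {G₀ : Type*} [GroupWithZero G₀] {x : G₀} (hx0 : x ≠ 0) {n : ℕ}
    (hx : x ^ n = 1) {a b : ℤ} (h : a ≡ b [ZMOD n]) : x ^ a = x ^ b := by
  obtain ⟨k, hk⟩ := h.dvd
  rw [show b = a + n * k by omega, zpow_add₀ hx0, zpow_mul, zpow_natCast, hx, one_zpow, mul_one]

section Field

variable {K : Type*} [Field K]

theorem geom_sum_pow_ne_zero_of_pow_eq_one {x : K} {n t m : ℕ} (hx : x ^ n = 1) (hm : (m : K) ≠ 0)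
    (hcop : Nat.gcd (n / Nat.gcd t n) m = 1) : ∑ i ∈ range m, (x ^ t) ^ i ≠ 0 := by
  intro hsum
  have hy_n : (x ^ t) ^ (n / Nat.gcd t n) = 1 := by
    rw [← pow_mul, ← Nat.mul_div_assoc t (Nat.gcd_dvd_right t n),
      Nat.mul_div_right_comm (Nat.gcd_dvd_left t n), pow_mul', hx, one_pow]
  have hy_m : (x ^ t) ^ m = 1 := sub_eq_zero.1 (by rw [← geom_sum_mul, hsum, zero_mul])
  have hy : x ^ t = 1 := by simpa [hcop] using pow_gcd_eq_one.2 ⟨hy_n, hy_m⟩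
  exact hm (by simpa [hy] using hsum)

variable {p : ℕ} [ExpChar K p]

theorem geom_sum_pow_expChar_pow_mul {y : K} {n : ℕ} (hy : y ^ (p ^ n + 1) = 1) (m : ℕ) :
    (∑ i ∈ range m, y ^ i) ^ p ^ n * y ^ (m - 1) = ∑ i ∈ range m, y ^ i := by
  rw [sum_pow_char_pow, sum_mul]
  symm
  rw [← sum_range_reflect]
  refine sum_congr rfl fun i hi => ?_
  have hi : i < m := mem_range.1 hi
  rw [← pow_mul, ← pow_add, show i * p ^ n + (m - 1) = (p ^ n + 1) * i + (m - 1 - i) by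
    zify [show i ≤ m - 1 by omega, show 1 ≤ m by omega]; ring, pow_add, pow_mul, hy, one_pow,
    one_mul]

theorem geom_sum_pow_expChar_pow_sub_one_mul {y : K} {n : ℕ} (hy : y ^ (p ^ n + 1) = 1) {m : ℕ}
    (hS : ∑ i ∈ range m, y ^ i ≠ 0) :
    (∑ i ∈ range m, y ^ i) ^ (p ^ n - 1) * y ^ (m - 1) = 1 := by
  apply mul_right_cancel₀ hS
  rw [one_mul, mul_right_comm, ← pow_succ,
    Nat.sub_add_cancel (Nat.one_le_pow _ _ (expChar_pos K p))]
  exact geom_sum_pow_expChar_pow_mul hy m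

end Field

theorem eq_of_pow_eq_of_pow_eq₀ {G₀ : Type*} [CommGroupWithZero G₀] {a b : G₀} (hb : b ≠ 0)
    {r d : ℕ} (hrd : Nat.gcd r d = 1) (hr : a ^ r = b ^ r) (hd : a ^ d = b ^ d) : a = b := by
  have hbr : b ^ r ≠ 0 := pow_ne_zero r hb
  have hbd : b ^ d ≠ 0 := pow_ne_zero d hb
  have h := pow_gcd_eq_one.2 ⟨(div_pow a b r).trans (div_eq_one_iff_eq hbr |>.2 hr),
    (div_pow a b d).trans (div_eq_one_iff_eq hbd |>.2 hd)⟩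
  rwa [hrd, pow_one, div_eq_one_iff_eq hb] at h

theorem FiniteField.bijective_pow_mul_comp_pow {F : Type*} [Field F] [Fintype F] {d e r : ℕ}
    (hcard : Fintype.card F = d * e + 1) (hr : 0 < r) (hrd : Nat.gcd r d = 1) (h : F → F)
    (hmaps : Set.MapsTo (fun x => x ^ r * h x ^ d) {x | x ^ e = 1} {x | x ^ e = 1})
    (hinj : Set.InjOn (fun x => x ^ r * h x ^ d) {x | x ^ e = 1}) :
    Function.Bijective (fun c => c ^ r * h (c ^ d)) := by
  have hde : d * e ≠ 0 := by
    have := Fintype.one_lt_card (α := F); omega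
  have hd0 : d ≠ 0 := left_ne_zero_of_mul hde
  have he0 : e ≠ 0 := right_ne_zero_of_mul hde
  have hpow_mem : ∀ c : F, c ≠ 0 → (c ^ d) ^ e = 1 := fun c hc => by
    rw [← pow_mul, ← Nat.add_sub_cancel (d * e) 1, ← hcard]
    exact FiniteField.pow_card_sub_one_eq_one c hc
  have hh : ∀ x : F, x ^ e = 1 → h x ≠ 0 := fun x hx h0 => by
    simpa [h0, zero_pow hd0, zero_pow he0] using hmaps hx
  have hf_eq_zero : ∀ c : F, c ^ r * h (c ^ d) = 0 ↔ c = 0 := fun c => by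
    refine ⟨fun h0 => ?_, fun hc => by simp [hc, hr.ne']⟩
    by_contra hc
    exact mul_ne_zero (pow_ne_zero r hc) (hh _ (hpow_mem c hc)) h0
  refine Finite.injective_iff_bijective.1 fun a b hab => ?_
  rcases eq_or_ne b 0 with rfl | hb
  · exact (hf_eq_zero a).1 (hab.trans ((hf_eq_zero 0).2 rfl))
  rcases eq_or_ne a 0 with rfl | ha
  · exact ((hf_eq_zero b).1 (hab.symm.trans ((hf_eq_zero 0).2 rfl))).symm
  have hd : a ^ d = b ^ d := hinj (hpow_mem a ha) (hpow_mem b hb) <| by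
    simpa only [mul_pow, ← pow_mul, mul_comm r d] using congrArg (· ^ d) hab
  have hr : a ^ r = b ^ r := by
    rw [hd] at hab
    exact mul_right_cancel₀ (hh _ (hpow_mem b hb)) hab
  exact eq_of_pow_eq_of_pow_eq₀ hb hrd hr hd

theorem stmt_4_general (q : ℕ) (hq : ∃ p n : ℕ, p.Prime ∧ 0 < n ∧ q = p ^ n)
    (F : Type) [Field F] [Fintype F] (hF : Fintype.card F = q ^ 2)
    (v : ℤ) (D : Polynomial F)
    (hD : Set.BijOn (fun x : F => x ^ v * D.eval x ^ (q - 1))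
      {x : F | x ^ (q + 1) = 1} {x : F | x ^ (q + 1) = 1})
    (s t : ℕ)
    (h1 : Nat.gcd (s + 1) q = 1)
    (h2 : Nat.gcd ((q + 1) / Nat.gcd t (q + 1)) (s + 1) = 1)
    (B : Polynomial F)
    (hB : D = B * ∑ j ∈ Finset.range (s + 1), Polynomial.X ^ (j * t))
    (r : ℕ) (hr : 0 < r) (hrq : Nat.gcd r (q - 1) = 1)
    (hmod : (r : ℤ) ≡ v - (s * t : ℕ) [ZMOD (q + 1)]) :
    Function.Bijective (fun c : F => c ^ r * B.eval (c ^ (q - 1))) := by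
  obtain ⟨p, n, hp, hn, rfl⟩ := hq
  have := Fact.mk hp
  have : CharP F p := charP_of_card_eq_prime_pow (f := n * 2) (by rw [hF, pow_mul])
  have hq1 : 1 ≤ p ^ n := Nat.one_le_pow _ _ hp.pos
  have hs : ((s + 1 : ℕ) : F) ≠ 0 := by
    rw [Ne, CharP.cast_eq_zero_iff F p]
    exact fun hps => hp.one_lt.ne' <|
      Nat.eq_one_of_dvd_coprimes h1 hps (dvd_pow_self p hn.ne')
  have hagree : Set.EqOn (fun x : F => x ^ v * D.eval x ^ (p ^ n - 1))
      (fun x => x ^ r * B.eval x ^ (p ^ n - 1)) {x | x ^ (p ^ n + 1) = 1} := fun x hx => by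
    have hx0 : x ≠ 0 := by rintro rfl; simp at hx
    have hxt : (x ^ t) ^ (p ^ n + 1) = 1 := by rw [← pow_mul, mul_comm, pow_mul, hx, one_pow]
    have hS := geom_sum_pow_expChar_pow_sub_one_mul hxt
      (geom_sum_pow_ne_zero_of_pow_eq_one hx hs h2)
    have hv : x ^ v = x ^ r * x ^ (s * t) := by
      rw [← pow_add, ← zpow_natCast]
      refine zpow_eq_zpow_of_modEq₀ hx0 hx ?_
      simpa using (hmod.add_right ((s * t : ℕ) : ℤ)).symm
    simp only [hB, eval_mul, eval_finsetSum, eval_pow, eval_X, pow_mul', Nat.add_sub_cancel]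
      at hS ⊢
    rw [hv]
    linear_combination (x ^ r * B.eval x ^ (p ^ n - 1)) * hS
  have hg := hD.congr hagree
  exact FiniteField.bijective_pow_mul_comp_pow (by rw [hF]; zify [hq1]; ring) hr hrq _
    hg.mapsTo hg.injOn

/-- Corollary 3.2: from a permutation `x ↦ x^v D(x)^{q-1}` of `μ_{q+1}`, if
`D = B·∑_{j=0}^{s} X^{jt}` then `X^r B(X^{q-1})` permutes `F_{q²}` for suitable `r`. -/
theorem stmt_4 (q : ℕ) (hq : ∃ p n : ℕ, p.Prime ∧ 0 < n ∧ q = p ^ n)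
    (F : Type) [Field F] [Fintype F] (hF : Fintype.card F = q ^ 2)
    (v : ℤ) (D : Polynomial F)
    (hD : Set.BijOn (fun x : F => x ^ v * D.eval x ^ (q - 1))
      {x : F | x ^ (q + 1) = 1} {x : F | x ^ (q + 1) = 1})
    (s t : ℕ) (hs : 0 < s) (ht : 0 < t)
    (h1 : Nat.gcd (s + 1) q = 1)
    (h2 : Nat.gcd ((q + 1) / Nat.gcd t (q + 1)) (s + 1) = 1)
    (B : Polynomial F)
    (hB : D = B * ∑ j ∈ Finset.range (s + 1), Polynomial.X ^ (j * t))
    (r : ℕ) (hr : 0 < r) (hrq : Nat.gcd r (q - 1) = 1)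
    (hmod : (r : ℤ) ≡ v - (s * t : ℕ) [ZMOD (q + 1)]) :
    Function.Bijective (fun c : F => c ^ r * B.eval (c ^ (q - 1))) :=
  stmt_4_general q hq F hF v D hD s t h1 h2 B hB r hr hrq hmod
end

section
/- Let k and ℓ be positive integers with ord₂(ℓ) ≤ ord₂(k), and set q := 2^k, Q := 2^ℓ, and D(X) := X^{Q+1} + X + 1 ∈ F₂[X]. Then the map x ↦ x^{Q+1} · D(x)^{q-1} permutes the group μ_{q+1} of (q+1)-th roots of unity in F_{q²}. -/
/-!
On `μ_{q+1}` we have `x ^ q = x⁻¹`, so `x ^ (Q + 1) * D(x) ^ q = 1 + x ^ Q + x ^ (Q + 1)` and the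
map is `x ↦ (1 + x ^ Q + x ^ (Q + 1)) / D(x)`. The condition on `ord₂` makes `gcd(ℓ, 2k)` divide
`k`, so every `w ∈ F_{q²}` with `w ^ Q = w` lies in `F_q`. In characteristic two, equal values
at `x` and `y` make `w = (x + y) / (x y + y + 1)` satisfy `w ^ Q = w`, hence `w ^ q = w`; but
`q`-th powering sends `w` to `(x + y) / (x y + x + 1)`, which forces `x = y`. The same fixed-field
argument shows that `D` has no zero on `μ_{q+1}`, and the image lies in `μ_{q+1}` because
`D(x) ^ (q² - 1) = 1`.
-/

theorem Nat.gcd_two_mul_dvd_of_padicValNat_le {k ℓ : ℕ} (hℓ : ℓ ≠ 0)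
    (h : padicValNat 2 ℓ ≤ padicValNat 2 k) : ℓ.gcd (2 * k) ∣ k := by
  rcases eq_or_ne k 0 with rfl | hk
  · exact dvd_zero _
  have hg : ℓ.gcd (2 * k) ≠ 0 := Nat.gcd_ne_zero_left hℓ
  rw [← Nat.factorization_le_iff_dvd hg hk]
  intro p
  rcases eq_or_ne p 2 with rfl | hp
  · calc (ℓ.gcd (2 * k)).factorization 2 ≤ ℓ.factorization 2 :=
          (Nat.factorization_le_iff_dvd hg hℓ).mpr (Nat.gcd_dvd_left _ _) 2
      _ ≤ k.factorization 2 := by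
          simpa only [Nat.factorization_def _ Nat.prime_two] using h
  · calc (ℓ.gcd (2 * k)).factorization p ≤ (2 * k).factorization p :=
          (Nat.factorization_le_iff_dvd hg (by positivity)).mpr (Nat.gcd_dvd_right _ _) p
      _ = k.factorization p := by
          simp [Nat.factorization_mul two_ne_zero hk, Nat.prime_two.factorization, hp.symm]

theorem pow_pow_eq_self_of_gcd_dvd {M : Type*} [Monoid M] {x : M} {p a b c : ℕ}
    (ha : x ^ p ^ a = x) (hb : x ^ p ^ b = x) (hc : a.gcd b ∣ c) : x ^ p ^ c = x := by
  have periodic (n : ℕ) : x ^ p ^ n = x ↔ Function.IsPeriodicPt (· ^ p) n x := by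
    rw [Function.IsPeriodicPt, Function.IsFixedPt, pow_iterate]
  rw [periodic] at ha hb ⊢
  exact (ha.gcd hb).trans_dvd hc

theorem pow_sub_one_mul_pow_succ_eq_one {F : Type*} [Field F] [Fintype F] {q m : ℕ}
    (hF : Fintype.card F = q ^ 2) {x c : F} (hx : x ^ (q + 1) = 1) (hc : c ≠ 0) :
    (x ^ m * c ^ (q - 1)) ^ (q + 1) = 1 := by
  have hexp : (q - 1) * (q + 1) = Fintype.card F - 1 := by
    rw [hF, mul_comm, ← Nat.sq_sub_sq, one_pow]
  rw [mul_pow, pow_right_comm, hx, one_pow, one_mul, ← pow_mul, hexp,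
    FiniteField.pow_card_sub_one_eq_one c hc]

theorem pow_eq_inv_of_pow_succ_eq_one {α : Type*} [DivisionMonoid α] {x : α} {n : ℕ}
    (h : x ^ (n + 1) = 1) : x ^ n = x⁻¹ :=
  eq_inv_of_mul_eq_one_left (by rwa [← pow_succ])

section Conjugation

variable {K : Type*} [Field K] {p k : ℕ} [ExpChar K p] {x y : K}

theorem pow_mul_add_add_one_pow_eq (n : ℕ) (hx : x ^ (p ^ k + 1) = 1) :
    x ^ (n + 1) * (x ^ (n + 1) + x + 1) ^ p ^ k = 1 + x ^ n + x ^ (n + 1) := by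
  have hx0 : x ≠ 0 := by rintro rfl; simp at hx
  rw [add_pow_expChar_pow, add_pow_expChar_pow, one_pow, ← pow_mul, pow_mul',
    pow_eq_inv_of_pow_succ_eq_one hx, inv_pow]
  field_simp
  ring

theorem add_div_mul_add_add_one_pow_eq (hx : x ^ (p ^ k + 1) = 1) (hy : y ^ (p ^ k + 1) = 1) :
    ((x + y) / (x * y + y + 1)) ^ p ^ k = (x + y) / (x * y + x + 1) := by
  have hx0 : x ≠ 0 := by rintro rfl; simp at hx
  have hy0 : y ≠ 0 := by rintro rfl; simp at hy
  rw [div_pow, ← mul_div_mul_right _ _ (mul_ne_zero hx0 hy0), add_pow_expChar_pow,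
    add_pow_expChar_pow, add_pow_expChar_pow, mul_pow, one_pow,
    pow_eq_inv_of_pow_succ_eq_one hx, pow_eq_inv_of_pow_succ_eq_one hy]
  congr 1 <;> field_simp <;> ring

end Conjugation

theorem two_pow_cross_identity {R : Type*} [CommRing R] [CharP R 2] (ℓ : ℕ) (x y : R) :
    (1 + x ^ 2 ^ ℓ + x ^ (2 ^ ℓ + 1)) * (y ^ (2 ^ ℓ + 1) + y + 1)
      + (1 + y ^ 2 ^ ℓ + y ^ (2 ^ ℓ + 1)) * (x ^ (2 ^ ℓ + 1) + x + 1)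
      = (x + y) ^ 2 ^ ℓ * (x * y + y + 1) + (x + y) * (x * y + y + 1) ^ 2 ^ ℓ := by
  rw [add_pow_char_pow, add_pow_char_pow, add_pow_char_pow, mul_pow, one_pow]
  linear_combination (x ^ (2 ^ ℓ + 1) * y ^ (2 ^ ℓ + 1) + x ^ (2 ^ ℓ + 1) + y ^ (2 ^ ℓ + 1) + 1
    - y * y ^ 2 ^ ℓ) * CharTwo.two_eq_zero (R := R)

section CharTwo

variable {K : Type*} [Field K] [CharP K 2] {k ℓ : ℕ} {x y : K}

theorem pow_add_add_one_ne_zero (hfix : ∀ w : K, w ^ 2 ^ ℓ = w → w ^ 2 ^ k = w)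
    (hx : x ^ (2 ^ k + 1) = 1) : x ^ (2 ^ ℓ + 1) + x + 1 ≠ 0 := by
  intro hD
  have hN : 1 + x ^ 2 ^ ℓ + x ^ (2 ^ ℓ + 1) = 0 := by
    rw [← pow_mul_add_add_one_pow_eq _ hx, hD, zero_pow (by positivity), mul_zero]
  have hxq : x ^ 2 ^ k = x := hfix x (by linear_combination hN - hD)
  have hx1 : x = 1 := by
    have hsq : (x - 1) ^ 2 = 0 := by
      rw [pow_succ, hxq] at hx
      linear_combination hx + (1 - x) * CharTwo.two_eq_zero (R := K)
    exact sub_eq_zero.mp (pow_eq_zero_iff two_ne_zero |>.mp hsq)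
  subst hx1
  simp only [one_pow] at hD
  exact one_ne_zero (by linear_combination hD - CharTwo.two_eq_zero (R := K))

theorem eq_of_cross_mul_eq (hfix : ∀ w : K, w ^ 2 ^ ℓ = w → w ^ 2 ^ k = w)
    (hx : x ^ (2 ^ k + 1) = 1) (hy : y ^ (2 ^ k + 1) = 1)
    (h : (1 + x ^ 2 ^ ℓ + x ^ (2 ^ ℓ + 1)) * (y ^ (2 ^ ℓ + 1) + y + 1)
      = (1 + y ^ 2 ^ ℓ + y ^ (2 ^ ℓ + 1)) * (x ^ (2 ^ ℓ + 1) + x + 1)) : x = y := by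
  set z := x * y + y + 1
  have hE : (x + y) ^ 2 ^ ℓ * z = (x + y) * z ^ 2 ^ ℓ := by
    linear_combination h - two_pow_cross_identity ℓ x y
      + ((1 + y ^ 2 ^ ℓ + y ^ (2 ^ ℓ + 1)) * (x ^ (2 ^ ℓ + 1) + x + 1) - (x + y) * z ^ 2 ^ ℓ)
        * CharTwo.two_eq_zero (R := K)
  have hw : ((x + y) / z) ^ 2 ^ ℓ = (x + y) / z := by
    rcases eq_or_ne z 0 with hz | hz
    · simp [hz]
    · rw [div_pow, div_eq_div_iff (pow_ne_zero _ hz) hz]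
      linear_combination hE
  have hconj : (x + y) / (x * y + x + 1) = (x + y) / z :=
    (add_div_mul_add_add_one_pow_eq hx hy).symm.trans (hfix _ hw)
  by_contra hne
  have hs : x + y ≠ 0 := fun hs => hne (CharTwo.add_eq_zero.mp hs)
  rw [div_eq_mul_inv, div_eq_mul_inv, mul_right_inj' hs, inv_inj] at hconj
  exact hne (by linear_combination hconj)

theorem injOn_pow_mul_pow_sub_one (hfix : ∀ w : K, w ^ 2 ^ ℓ = w → w ^ 2 ^ k = w) :
    Set.InjOn (fun x : K => x ^ (2 ^ ℓ + 1) * (x ^ (2 ^ ℓ + 1) + x + 1) ^ (2 ^ k - 1))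
      {x | x ^ (2 ^ k + 1) = 1} := by
  intro x hx y hy hxy
  dsimp only at hxy
  refine eq_of_cross_mul_eq hfix hx hy ?_
  rw [← pow_mul_add_add_one_pow_eq _ hx, ← pow_mul_add_add_one_pow_eq _ hy,
    ← pow_sub_one_mul (pow_ne_zero k two_ne_zero), ← pow_sub_one_mul (pow_ne_zero k two_ne_zero)]
  linear_combination (x ^ (2 ^ ℓ + 1) + x + 1) * (y ^ (2 ^ ℓ + 1) + y + 1) * hxy

end CharTwo

theorem stmt_5_general (k ℓ : ℕ) (hl : 0 < ℓ)
    (hord : padicValNat 2 ℓ ≤ padicValNat 2 k)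
    (q Q : ℕ) (hq : q = 2 ^ k) (hQ : Q = 2 ^ ℓ)
    (F : Type) [Field F] [Fintype F] (hF : Fintype.card F = q ^ 2)
    (D : Polynomial F) (hD : D = Polynomial.X ^ (Q + 1) + Polynomial.X + 1) :
    Set.BijOn (fun x : F => x ^ (Q + 1) * D.eval x ^ (q - 1))
      {x : F | x ^ (q + 1) = 1} {x : F | x ^ (q + 1) = 1} := by
  subst hq hQ hD
  have : CharP F 2 := charP_of_card_eq_prime_pow (by rw [hF, ← pow_mul])
  have hfix (w : F) (hw : w ^ 2 ^ ℓ = w) : w ^ 2 ^ k = w := by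
    refine pow_pow_eq_self_of_gcd_dvd hw ?_ (Nat.gcd_two_mul_dvd_of_padicValNat_le hl.ne' hord)
    rw [mul_comm, pow_mul, ← hF, FiniteField.pow_card]
  simp only [Polynomial.eval_add, Polynomial.eval_pow, Polynomial.eval_X, Polynomial.eval_one]
  refine ((Set.toFinite _).injOn_iff_bijOn_of_mapsTo fun x hx => ?_).mp
    (injOn_pow_mul_pow_sub_one hfix)
  exact pow_sub_one_mul_pow_succ_eq_one hF hx (pow_add_add_one_ne_zero hfix hx)

/-- Lemma 4.1: for `q = 2^k`, `Q = 2^ℓ` with `ord₂(ℓ) ≤ ord₂(k)` and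
`D(X) = X^{Q+1} + X + 1`, the map `x ↦ x^{Q+1} D(x)^{q-1}` permutes `μ_{q+1}`. -/
theorem stmt_5 (k ℓ : ℕ) (hk : 0 < k) (hl : 0 < ℓ)
    (hord : padicValNat 2 ℓ ≤ padicValNat 2 k)
    (q Q : ℕ) (hq : q = 2 ^ k) (hQ : Q = 2 ^ ℓ)
    (F : Type) [Field F] [Fintype F] (hF : Fintype.card F = q ^ 2)
    (D : Polynomial F) (hD : D = Polynomial.X ^ (Q + 1) + Polynomial.X + 1) :
    Set.BijOn (fun x : F => x ^ (Q + 1) * D.eval x ^ (q - 1))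
      {x : F | x ^ (q + 1) = 1} {x : F | x ^ (q + 1) = 1} :=
  stmt_5_general k ℓ hl hord q Q hq hQ F hF D hD
end

section
/- Let k and ℓ be positive integers with ord₂(ℓ) ≠ ord₂(k), and set q := 2^k, Q := 2^ℓ, and D(X) := X^Q + X + 1 ∈ F₂[X]. Then the map x ↦ x^{Q+1} · D(x)^{q-1} permutes the group μ_{q+1} of (q+1)-th roots of unity in F_{q²}. -/
/-!
On `μ_{q+1}` we have `x^q = x⁻¹`, so `x^{Q+1} D(x)^q = x^{Q+1} + x^Q + x`: the map `f` is the rational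
function `(x^{Q+1} + x^Q + x) / D(x)`. The condition on 2-adic valuations says exactly that `Q + 1`
and `q + 1` are coprime. So `D` has no root on `μ_{q+1}`: a root satisfies `x^{Q+1} = 1`, hence
`x = 1`, which is not a root. In characteristic 2, clearing denominators in `f(x) = f(y)` gives
`b (x + y)^Q = a^Q (x + y)` and `a (x + y)^Q = b^Q (x + y)` for `a = xy + x + 1`, `b = xy + y + 1`,
whence `a^{Q+1} = b^{Q+1}`, while `x^q = x⁻¹`, `y^q = y⁻¹` give `a^{q+1} = b^{q+1}`. By coprimality
`a = b`, i.e. `x = y`; an injective self-map of a finite set is bijective.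
-/

theorem neg_one_eq_one_of_pow_eq_neg_one {M : Type*} [Monoid M] [HasDistribNeg M] {x : M}
    {a b : ℕ} (ha : x ^ a = -1) (hb : x ^ b = -1)
    (hab : padicValNat 2 a < padicValNat 2 b) : (-1 : M) = 1 := by
  rcases eq_or_ne a 0 with rfl | ha0
  · rw [← ha, pow_zero]
  obtain ⟨s, a', ha', rfl⟩ := Nat.exists_eq_two_pow_mul_odd ha0
  have hs : padicValNat 2 (2 ^ s * a') = s := by
    rw [padicValNat.mul (by positivity) ha'.pos.ne', padicValNat.prime_pow,
      padicValNat.eq_zero_of_not_dvd ha'.not_two_dvd_nat, add_zero]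
  obtain ⟨c, rfl⟩ : 2 ^ (s + 1) ∣ b := (pow_dvd_pow 2 (hs ▸ hab)).trans pow_padicValNat_dvd
  calc (-1 : M) = (x ^ (2 ^ (s + 1) * c)) ^ a' := by rw [hb, ha'.neg_one_pow]
    _ = (x ^ (2 ^ s * a')) ^ (2 * c) := by rw [← pow_mul, ← pow_mul]; ring_nf
    _ = 1 := by rw [ha, pow_mul, neg_one_sq, one_pow]

theorem Nat.coprime_two_pow_add_one {a b : ℕ} (h : padicValNat 2 a ≠ padicValNat 2 b) :
    (2 ^ a + 1).Coprime (2 ^ b + 1) := by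
  wlog hab : padicValNat 2 a < padicValNat 2 b generalizing a b
  · exact (this h.symm (h.lt_or_gt.resolve_left hab)).symm
  refine Nat.coprime_of_dvd fun p hp hpa hpb => ?_
  have : Fact p.Prime := ⟨hp⟩
  have hneg : ∀ n, p ∣ 2 ^ n + 1 → (2 : ZMod p) ^ n = -1 := fun n hn => by
    rw [eq_neg_iff_add_eq_zero]
    exact_mod_cast (ZMod.natCast_eq_zero_iff _ _).2 hn
  have hp2 := neg_one_eq_one_iff.1 (neg_one_eq_one_of_pow_eq_neg_one (hneg a hpa) (hneg b hpb) hab)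
  rw [ZMod.ringChar_zmod_n] at hp2
  subst hp2
  have hb : b ≠ 0 := by rintro rfl; simp at hab
  exact absurd ((Nat.dvd_add_right (dvd_pow_self 2 hb)).1 hpb) (by norm_num)

theorem eq_of_pow_eq_pow_of_coprime {G₀ : Type*} [CommGroupWithZero G₀] {a b : G₀} {m n : ℕ}
    (hmn : m.Coprime n) (hb : b ≠ 0) (hm : a ^ m = b ^ m) (hn : a ^ n = b ^ n) : a = b := by
  rw [← div_eq_one_iff_eq hb, ← pow_eq_one_iff_of_coprime hmn, div_pow, div_pow,
    div_eq_one_iff_eq (pow_ne_zero _ hb), div_eq_one_iff_eq (pow_ne_zero _ hb)]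
  exact ⟨hm, hn⟩

theorem pow_succ_eq_pow_succ_of_mul_pow_eq {R : Type*} [CommRing R] [IsDomain R] {a b s : R}
    {n : ℕ} (hs : s ≠ 0) (hb : b * s ^ n = a ^ n * s) (ha : a * s ^ n = b ^ n * s) :
    a ^ (n + 1) = b ^ (n + 1) :=
  mul_right_cancel₀ (pow_ne_zero n hs) (by linear_combination a ^ n * ha - b ^ n * hb)

theorem trinomial_cross_identity {R : Type*} [CommRing R] [CharP R 2] {ℓ : ℕ} (x y : R) :
    (x ^ (2 ^ ℓ + 1) + x ^ 2 ^ ℓ + x) * (y ^ 2 ^ ℓ + y + 1)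
      + (y ^ (2 ^ ℓ + 1) + y ^ 2 ^ ℓ + y) * (x ^ 2 ^ ℓ + x + 1)
      = (x * y + y + 1) * (x + y) ^ 2 ^ ℓ + (x * y + x + 1) ^ 2 ^ ℓ * (x + y) := by
  have two : (2 : R) = 0 := CharTwo.two_eq_zero
  simp only [add_pow_char_pow, mul_pow, one_pow]
  linear_combination (x ^ 2 ^ ℓ * y ^ 2 ^ ℓ + x * y ^ 2 ^ ℓ + x * y) * two

section CharTwoField

variable {F : Type*} [Field F] [CharP F 2] {k ℓ : ℕ} {x y : F}

theorem trinomial_ne_zero_of_pow_eq_one (hcop : (2 ^ ℓ + 1).Coprime (2 ^ k + 1))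
    (hx : x ^ (2 ^ k + 1) = 1) : x ^ 2 ^ ℓ + x + 1 ≠ 0 := by
  intro h0
  have two : (2 : F) = 0 := CharTwo.two_eq_zero
  have hxQ : x ^ 2 ^ ℓ = x + 1 := by linear_combination h0 - (x + 1) * two
  have hconj : x ^ 2 ^ k + x = 1 := by
    have h : (x + 1) ^ (2 ^ k + 1) = 1 := by
      rw [← hxQ, ← pow_mul, mul_comm, pow_mul, hx, one_pow]
    rw [pow_succ, add_pow_char_pow, one_pow] at h
    linear_combination h - hx - two
  have hxQ1 : x ^ (2 ^ ℓ + 1) = 1 := by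
    linear_combination x * hxQ + x * hconj - hx + (x - 1) * two
  obtain rfl : x = 1 := (pow_eq_one_iff_of_coprime hcop).1 ⟨hxQ1, hx⟩
  exact one_ne_zero (by linear_combination h0 - two)

theorem mul_trinomial_pow_eq (hx : x ^ (2 ^ k + 1) = 1) :
    x ^ (2 ^ ℓ + 1) * (x ^ 2 ^ ℓ + x + 1) ^ 2 ^ k = x ^ (2 ^ ℓ + 1) + x ^ 2 ^ ℓ + x := by
  have hxQ : (x ^ 2 ^ k * x) ^ 2 ^ ℓ = 1 := by rw [← pow_succ, hx, one_pow]
  simp only [add_pow_char_pow, one_pow]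
  linear_combination x * hxQ + x ^ 2 ^ ℓ * hx

theorem mul_add_pow_eq_of_apply_eq (hx : x ^ (2 ^ k + 1) = 1) (hy : y ^ (2 ^ k + 1) = 1)
    (hxy : x ^ (2 ^ ℓ + 1) * (x ^ 2 ^ ℓ + x + 1) ^ (2 ^ k - 1)
      = y ^ (2 ^ ℓ + 1) * (y ^ 2 ^ ℓ + y + 1) ^ (2 ^ k - 1)) :
    (x * y + y + 1) * (x + y) ^ 2 ^ ℓ = (x * y + x + 1) ^ 2 ^ ℓ * (x + y) := by
  have hD : ∀ z : F, z ^ (2 ^ k + 1) = 1 →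
      z ^ (2 ^ ℓ + 1) * (z ^ 2 ^ ℓ + z + 1) ^ (2 ^ k - 1) * (z ^ 2 ^ ℓ + z + 1)
        = z ^ (2 ^ ℓ + 1) + z ^ 2 ^ ℓ + z := fun z hz => by
    rw [mul_assoc, ← pow_succ, Nat.sub_add_cancel Nat.one_le_two_pow, mul_trinomial_pow_eq hz]
  have h : (x ^ (2 ^ ℓ + 1) + x ^ 2 ^ ℓ + x) * (y ^ 2 ^ ℓ + y + 1)
      = (y ^ (2 ^ ℓ + 1) + y ^ 2 ^ ℓ + y) * (x ^ 2 ^ ℓ + x + 1) := by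
    rw [← hD x hx, ← hD y hy, hxy]
    ring
  exact CharTwo.add_eq_zero.1 ((trinomial_cross_identity x y).symm.trans (CharTwo.add_eq_zero.2 h))

theorem mul_mul_add_add_one_pow_eq (hx : x ^ (2 ^ k + 1) = 1) (hy : y ^ (2 ^ k + 1) = 1) :
    x * y * (x * y + x + 1) ^ 2 ^ k = x * y + y + 1 := by
  simp only [add_pow_char_pow, mul_pow, one_pow]
  linear_combination (y ^ 2 ^ k * y + y) * hx + hy

theorem injOn_pow_mul_trinomial_pow (hcop : (2 ^ ℓ + 1).Coprime (2 ^ k + 1)) :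
    Set.InjOn (fun x : F => x ^ (2 ^ ℓ + 1) * (x ^ 2 ^ ℓ + x + 1) ^ (2 ^ k - 1))
      {x | x ^ (2 ^ k + 1) = 1} := by
  intro x (hx : x ^ (2 ^ k + 1) = 1) y (hy : y ^ (2 ^ k + 1) = 1) hxy
  have two : (2 : F) = 0 := CharTwo.two_eq_zero
  by_contra hne
  have hs : x + y ≠ 0 := fun h => hne (CharTwo.add_eq_zero.1 h)
  have hQ : (x * y + x + 1) ^ (2 ^ ℓ + 1) = (x * y + y + 1) ^ (2 ^ ℓ + 1) :=
    pow_succ_eq_pow_succ_of_mul_pow_eq hs (mul_add_pow_eq_of_apply_eq hx hy hxy)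
      (by linear_combination mul_add_pow_eq_of_apply_eq hy hx hxy.symm)
  have hb : x * y + y + 1 ≠ 0 := by
    intro hb
    have ha : x * y + x + 1 = 0 := by
      rw [← pow_eq_zero_iff (Nat.succ_ne_zero _), hQ, hb, zero_pow (Nat.succ_ne_zero _)]
    exact hs (by linear_combination ha + hb - (x * y + 1) * two)
  have hxy0 : x * y ≠ 0 := mul_ne_zero (by rintro rfl; simp at hx) (by rintro rfl; simp at hy)
  have hq : (x * y + x + 1) ^ (2 ^ k + 1) = (x * y + y + 1) ^ (2 ^ k + 1) :=
    mul_left_cancel₀ hxy0 (by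
      linear_combination (x * y + x + 1) * mul_mul_add_add_one_pow_eq hx hy
        - (x * y + y + 1) * mul_mul_add_add_one_pow_eq hy hx)
  exact hne (by linear_combination eq_of_pow_eq_pow_of_coprime hcop hb hQ hq)

theorem mapsTo_pow_mul_trinomial_pow (hcop : (2 ^ ℓ + 1).Coprime (2 ^ k + 1)) [Fintype F]
    (hF : Fintype.card F = (2 ^ k) ^ 2) :
    Set.MapsTo (fun x : F => x ^ (2 ^ ℓ + 1) * (x ^ 2 ^ ℓ + x + 1) ^ (2 ^ k - 1))
      {x | x ^ (2 ^ k + 1) = 1} {x | x ^ (2 ^ k + 1) = 1} := by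
  intro x (hx : x ^ (2 ^ k + 1) = 1)
  have hcard : (2 ^ k - 1) * (2 ^ k + 1) = Fintype.card F - 1 := by
    rw [hF, mul_comm, ← Nat.sq_sub_sq, one_pow]
  show (x ^ (2 ^ ℓ + 1) * (x ^ 2 ^ ℓ + x + 1) ^ (2 ^ k - 1)) ^ (2 ^ k + 1) = 1
  rw [mul_pow, ← pow_mul, ← pow_mul, mul_comm (2 ^ ℓ + 1), pow_mul, hx, one_pow, one_mul,
    hcard, FiniteField.pow_card_sub_one_eq_one _ (trinomial_ne_zero_of_pow_eq_one hcop hx)]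

end CharTwoField

theorem stmt_6_general (k ℓ : ℕ) (hk : 0 < k)
    (hord : padicValNat 2 ℓ ≠ padicValNat 2 k)
    (q Q : ℕ) (hq : q = 2 ^ k) (hQ : Q = 2 ^ ℓ)
    (F : Type) [Field F] [Fintype F] (hF : Fintype.card F = q ^ 2)
    (D : Polynomial F) (hD : D = Polynomial.X ^ Q + Polynomial.X + 1) :
    Set.BijOn (fun x : F => x ^ (Q + 1) * D.eval x ^ (q - 1))
      {x : F | x ^ (q + 1) = 1} {x : F | x ^ (q + 1) = 1} := by
  subst hq hQ hD
  have : CharP F 2 := ringChar.of_eq <| FiniteField.even_card_iff_char_two.2 <| by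
    rw [hF, ← Nat.even_iff]
    exact Nat.even_pow.2 ⟨Nat.even_pow.2 ⟨even_two, hk.ne'⟩, two_ne_zero⟩
  have hcop := Nat.coprime_two_pow_add_one hord
  simp only [Polynomial.eval_add, Polynomial.eval_pow, Polynomial.eval_X, Polynomial.eval_one]
  exact (Set.toFinite _).injOn_iff_bijOn_of_mapsTo (mapsTo_pow_mul_trinomial_pow hcop hF)
    |>.1 (injOn_pow_mul_trinomial_pow hcop)

/-- Lemma 4.2: for `q = 2^k`, `Q = 2^ℓ` with `ord₂(ℓ) ≠ ord₂(k)` and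
`D(X) = X^Q + X + 1`, the map `x ↦ x^{Q+1} D(x)^{q-1}` permutes `μ_{q+1}`. -/
theorem stmt_6 (k ℓ : ℕ) (hk : 0 < k) (hl : 0 < ℓ)
    (hord : padicValNat 2 ℓ ≠ padicValNat 2 k)
    (q Q : ℕ) (hq : q = 2 ^ k) (hQ : Q = 2 ^ ℓ)
    (F : Type) [Field F] [Fintype F] (hF : Fintype.card F = q ^ 2)
    (D : Polynomial F) (hD : D = Polynomial.X ^ Q + Polynomial.X + 1) :
    Set.BijOn (fun x : F => x ^ (Q + 1) * D.eval x ^ (q - 1))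
      {x : F | x ^ (q + 1) = 1} {x : F | x ^ (q + 1) = 1} :=
  stmt_6_general k ℓ hk hord q Q hq hQ F hF D hD
end

section
/- Let k and ℓ be even positive integers with ord₂(ℓ) ≤ ord₂(k), set q := 2^k and Q := 2^ℓ, and let B(X) := (X^{Q+1} + X + 1)/(X² + X + 1) ∈ F₂[X]. If r is a positive integer with gcd(r, q-1) = 1 and r ≡ Q - 1 (mod q+1), then X^r · B(X^{q-1}) is a permutation polynomial of F_{q²}. -/
/-!
Write `q = 2 ^ k`, `Q = 2 ^ ℓ`, `N(z) = z ^ (Q + 1) + z + 1`, `M(z) = z ^ (Q + 1) + z ^ Q + 1`,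
and let `μ` be the group of `(q + 1)`-th roots of unity of `F_{q²}`. For `c ≠ 0` put
`z = c ^ (q - 1) ∈ μ`. Since `z ^ q = z⁻¹` and `r ≡ Q - 1 (mod q + 1)`, the value
`y = c ^ r B(z)` satisfies `y ^ q N(z) = y M(z)`; this needs `z ^ 2 + z + 1 ≠ 0` on `μ`, i.e.
`3 ∤ q + 1`, which is where `k` even enters. So two points with the same value have the same
ratio `M/N` at their `z`'s; once `M/N`, equivalently `(z ^ Q + z) / N(z)`, is injective on `μ`,
the points have equal `r`-th and `(q - 1)`-th powers, hence are equal.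

The substitution `z = 1 + 1/w` maps the coset `{w | w ^ q = w + 1}` onto `μ \ {1}` and preserves
`(z ^ Q + z) / N(z)`. Because `ord₂ ℓ ≤ ord₂ k` there are `n` and an odd `m` with `n ℓ = m k`, so
`x ↦ x ^ Q` iterated `n` times equals `x ↦ x ^ q` iterated `m` times. If `w ^ q = w + 1` and
`w ^ Q = w + β` with `β ^ Q = β`, comparing the two iterates gives `n β = m = 1`. In particular no
point of the coset is fixed by `x ↦ x ^ Q`, while two points `w ≠ v` of the coset with the same
ratio would yield such a fixed point, `w + (w² + w + 1)/(w + v)`, or a `β ≠ 1` as above.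
-/

theorem Nat.exists_mul_eq_odd_mul_of_padicValNat_le {k ℓ : ℕ} (hk : k ≠ 0) (hℓ : ℓ ≠ 0)
    (hord : padicValNat 2 ℓ ≤ padicValNat 2 k) : ∃ n m : ℕ, Odd m ∧ n * ℓ = m * k := by
  obtain ⟨a, ℓ', hℓ', rfl⟩ := Nat.exists_eq_two_pow_mul_odd hℓ
  obtain ⟨b, k', hk', rfl⟩ := Nat.exists_eq_two_pow_mul_odd hk
  have hval (e o : ℕ) (ho : Odd o) : padicValNat 2 (2 ^ e * o) = e := by
    rw [padicValNat.mul (by positivity) ho.pos.ne', padicValNat.prime_pow,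
      padicValNat.eq_zero_of_not_dvd ho.not_two_dvd_nat, add_zero]
  rw [hval a ℓ' hℓ', hval b k' hk'] at hord
  obtain ⟨d, rfl⟩ := Nat.exists_eq_add_of_le hord
  exact ⟨2 ^ d * k', ℓ', hℓ', by ring⟩

theorem eq_of_pow_eq_of_pow_eq_of_coprime {G₀ : Type*} [CommGroupWithZero G₀] {a b : G₀}
    {s t : ℕ} (hst : s.Coprime t) (hb : b ≠ 0) (hs : a ^ s = b ^ s) (ht : a ^ t = b ^ t) :
    a = b := by
  rw [← div_eq_one_iff_eq hb, ← pow_eq_one_iff_of_coprime hst, div_pow, div_pow, hs, ht]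
  exact ⟨div_self (pow_ne_zero _ hb), div_self (pow_ne_zero _ hb)⟩

section CharTwo

variable {R : Type*} [CommRing R] [CharP R 2]

theorem CharTwo.natCast_eq_one_of_odd {n : ℕ} (hn : Odd n) : (n : R) = 1 := by
  simp [CharTwo.natCast_eq_ite, Nat.not_even_iff_odd.mpr hn]

theorem CharTwo.trinomial_pow_two_pow (a k : ℕ) (z : R) :
    (z ^ a + z + 1) ^ 2 ^ k = (z ^ 2 ^ k) ^ a + z ^ 2 ^ k + 1 := by
  rw [add_pow_char_pow, add_pow_char_pow, one_pow, pow_right_comm]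

theorem CharTwo.pow_two_pow_mul_of_pow_two_pow_eq_add {s : ℕ} {x c : R}
    (hx : x ^ 2 ^ s = x + c) (hc : c ^ 2 ^ s = c) (n : ℕ) :
    x ^ 2 ^ (n * s) = x + n * c := by
  induction n with
  | zero => simp
  | succ n ih =>
    rw [add_mul, one_mul, pow_add, pow_mul, ih, add_pow_char_pow, mul_pow, hx, hc,
      ← Nat.cast_pow]
    rcases CharTwo.natCast_cases (R := R) n with h | h <;> simp [h]

theorem CharTwo.pow_two_pow_add_self_mul_of_mul_eq_add_one {z w : R} (hzw : z * w = w + 1) (ℓ : ℕ) :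
    (z ^ 2 ^ ℓ + z) * w ^ (2 ^ ℓ + 1) = w ^ 2 ^ ℓ + w := by
  have hℓ : z ^ 2 ^ ℓ * w ^ 2 ^ ℓ = w ^ 2 ^ ℓ + 1 := by
    rw [← mul_pow, hzw, add_pow_char_pow, one_pow]
  linear_combination (norm := ring_nf) w * hℓ + w ^ 2 ^ ℓ * hzw
  simp

theorem CharTwo.trinomial_mul_of_mul_eq_add_one {z w : R} (hzw : z * w = w + 1) (ℓ : ℕ) :
    (z ^ (2 ^ ℓ + 1) + z + 1) * w ^ (2 ^ ℓ + 1) = w ^ (2 ^ ℓ + 1) + w + 1 := by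
  have hℓ : z ^ 2 ^ ℓ * w ^ 2 ^ ℓ = w ^ 2 ^ ℓ + 1 := by
    rw [← mul_pow, hzw, add_pow_char_pow, one_pow]
  linear_combination (norm := ring_nf) (z * w) * hℓ + (2 * w ^ 2 ^ ℓ + 1) * hzw
  simp

end CharTwo

section ArtinSchreier

variable {F : Type*} [Field F] [CharP F 2] {k ℓ n m : ℕ}

theorem eq_one_of_pow_two_pow_eq_add_one (hnm : n * ℓ = m * k) (hm : Odd m) {w β : F}
    (hw : w ^ 2 ^ k = w + 1) (hwβ : w ^ 2 ^ ℓ = w + β) (hβ : β ^ 2 ^ ℓ = β) : β = 1 := by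
  have hℓ := CharTwo.pow_two_pow_mul_of_pow_two_pow_eq_add hwβ hβ n
  have hk := CharTwo.pow_two_pow_mul_of_pow_two_pow_eq_add hw (one_pow _) m
  rw [hnm, hk, CharTwo.natCast_eq_one_of_odd hm, one_mul, add_right_inj] at hℓ
  rcases CharTwo.natCast_cases (R := F) n with h | h <;> rw [h] at hℓ
  · exact absurd (hℓ.trans (zero_mul β)) one_ne_zero
  · exact (hℓ.trans (one_mul β)).symm

theorem pow_two_pow_ne_self_of_pow_eq_add_one (hnm : n * ℓ = m * k) (hm : Odd m) {w : F}
    (hw : w ^ 2 ^ k = w + 1) : w ^ 2 ^ ℓ ≠ w := fun h =>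
  zero_ne_one <|
    eq_one_of_pow_two_pow_eq_add_one hnm hm hw (by rw [h, add_zero]) (zero_pow (by positivity))

theorem pow_two_pow_ne_add_of_pow_eq_add_one (hnm : n * ℓ = m * k) (hm : Odd m) {w x a : F}
    (hw : w ^ 2 ^ k = w + 1) (hwa : w ^ 2 ^ ℓ = w + a) (hx : x ^ 2 ^ k = x) :
    x ^ 2 ^ ℓ ≠ x + a := fun hxa =>
  pow_two_pow_ne_self_of_pow_eq_add_one hnm hm (w := w + x)
    (by rw [add_pow_char_pow, hw, hx]; ring)
    (by rw [add_pow_char_pow, hwa, hxa]; linear_combination a * CharTwo.two_eq_zero (R := F))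

theorem eq_of_ratio_eq_of_pow_two_pow_eq_add_one (hnm : n * ℓ = m * k) (hm : Odd m) {w v : F}
    (hw : w ^ 2 ^ k = w + 1) (hv : v ^ 2 ^ k = v + 1)
    (h : (w ^ 2 ^ ℓ + w) * (v ^ (2 ^ ℓ + 1) + v + 1) =
      (v ^ 2 ^ ℓ + v) * (w ^ (2 ^ ℓ + 1) + w + 1)) :
    w = v := by
  have h2 : (2 : F) = 0 := CharTwo.two_eq_zero
  by_contra hne
  obtain ⟨a, hwa⟩ : ∃ a, w ^ 2 ^ ℓ = w + a := ⟨w ^ 2 ^ ℓ - w, by ring⟩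
  obtain ⟨b, hvb⟩ : ∃ b, v ^ 2 ^ ℓ = v + b := ⟨v ^ 2 ^ ℓ - v, by ring⟩
  obtain ⟨t, rfl⟩ : ∃ t, v = w + t := ⟨v - w, by ring⟩
  rw [pow_succ, pow_succ, hwa, hvb] at h
  have ht : t ≠ 0 := by rintro rfl; simp at hne
  have ha : a ≠ 0 := by
    rintro rfl; exact pow_two_pow_ne_self_of_pow_eq_add_one hnm hm hw (by rw [hwa, add_zero])
  have htℓ : t ^ 2 ^ ℓ = t + (a + b) := by
    rw [add_pow_char_pow, hwa] at hvb
    linear_combination hvb - a * h2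
  have htk : t ^ 2 ^ k = t := by rw [add_pow_char_pow, hw] at hv; linear_combination hv
  have key : (a + b) * (w ^ 2 + w + 1) = a * t * (t + b + 1) := by
    linear_combination (norm := ring_nf) h
    simp [CharTwo.two_eq_zero]
  by_cases hs : a + b = 0
  · have hat : a = t + 1 := by
      rw [hs, zero_mul] at key
      rcases mul_eq_zero.mp key.symm with h0 | h0
      · exact absurd h0 (mul_ne_zero ha ht)
      · rw [← CharTwo.add_eq_zero.mp hs] at h0; linear_combination h0 - (t + 1) * h2
    have ha1 : a = 1 := eq_one_of_pow_two_pow_eq_add_one hnm hm hw hwa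
      (by rw [hat, add_pow_char_pow, one_pow, htℓ, hs, add_zero])
    exact ht (by linear_combination ha1 - hat)
  obtain ⟨x, hxt⟩ : ∃ x, x * t = w ^ 2 + w + 1 := ⟨_, div_mul_cancel₀ _ ht⟩
  have hxs : (a + b) * x = a * (t + b + 1) :=
    mul_right_cancel₀ ht <| by
      linear_combination (norm := ring_nf) (a + b) * hxt - key
      simp [CharTwo.two_eq_zero]
  have hxk : x ^ 2 ^ k = x := by
    refine mul_right_cancel₀ ht ?_
    rw [← htk, ← mul_pow, hxt, CharTwo.trinomial_pow_two_pow, hw, htk]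
    linear_combination (norm := ring_nf) - hxt
    simp [CharTwo.two_eq_zero]
  refine pow_two_pow_ne_add_of_pow_eq_add_one hnm hm hw hwa hxk ?_
  refine mul_right_cancel₀ (b := t + (a + b)) (htℓ ▸ pow_ne_zero _ ht) ?_
  rw [← htℓ, ← mul_pow, hxt, CharTwo.trinomial_pow_two_pow, hwa]
  linear_combination (norm := ring_nf) (x + a) * htℓ - hxt - hxs
  simp [CharTwo.two_eq_zero]

end ArtinSchreier

section UnitCircle

variable {F : Type*} [Field F] [CharP F 2] {k ℓ n m : ℕ} {z x : F}

theorem exists_pow_two_pow_eq_add_one_of_pow_eq_one (hz : z ^ (2 ^ k + 1) = 1) (hz1 : z ≠ 1) :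
    ∃ w : F, w ^ 2 ^ k = w + 1 ∧ z * w = w + 1 := by
  have hz0 : z ≠ 0 := by rintro rfl; simp at hz
  have hz1' : z + 1 ≠ 0 := fun h => hz1 (CharTwo.add_eq_zero.mp h)
  have hzk : z ^ 2 ^ k = z⁻¹ := eq_inv_of_mul_eq_one_left (by rw [← pow_succ, hz])
  refine ⟨(z + 1)⁻¹, ?_, ?_⟩
  · rw [inv_pow, add_pow_char_pow, one_pow, hzk]
    field_simp
    rw [add_comm 1 z, mul_div_cancel_right₀ _ hz1', add_comm 1, CharTwo.add_cancel_right]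
  · field_simp
    rw [add_comm 1, CharTwo.add_cancel_right]

theorem pow_two_pow_eq_self_iff_of_pow_eq_one (hnm : n * ℓ = m * k) (hm : Odd m)
    (hz : z ^ (2 ^ k + 1) = 1) : z ^ 2 ^ ℓ = z ↔ z = 1 := by
  refine ⟨fun hzℓ => ?_, fun h => by rw [h, one_pow]⟩
  by_contra hz1
  obtain ⟨w, hw, hzw⟩ := exists_pow_two_pow_eq_add_one_of_pow_eq_one hz hz1
  have hL := CharTwo.pow_two_pow_add_self_mul_of_mul_eq_add_one hzw ℓ
  rw [hzℓ, CharTwo.add_self_eq_zero, zero_mul, eq_comm, CharTwo.add_eq_zero] at hL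
  exact pow_two_pow_ne_self_of_pow_eq_add_one hnm hm hw hL

theorem trinomial_ne_zero_of_pow_eq_one_s11 (hnm : n * ℓ = m * k) (hm : Odd m)
    (hz : z ^ (2 ^ k + 1) = 1) : z ^ (2 ^ ℓ + 1) + z + 1 ≠ 0 := by
  intro hN
  have hzk : z ^ 2 ^ k * z = 1 := by rw [← pow_succ, hz]
  have hNk := CharTwo.trinomial_pow_two_pow (2 ^ ℓ + 1) k z
  rw [hN, zero_pow (by positivity)] at hNk
  have hM : z ^ (2 ^ ℓ + 1) + z ^ 2 ^ ℓ + 1 = 0 := by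
    have e : z ^ (2 ^ ℓ + 1) * ((z ^ 2 ^ k) ^ (2 ^ ℓ + 1) + z ^ 2 ^ k + 1) =
        (z ^ 2 ^ k * z) ^ (2 ^ ℓ + 1) + z ^ 2 ^ ℓ * (z ^ 2 ^ k * z) + z ^ (2 ^ ℓ + 1) := by ring
    rw [hzk, ← hNk, one_pow, mul_one, mul_zero] at e
    linear_combination -e
  have hz1 : z = 1 := by
    refine (pow_two_pow_eq_self_iff_of_pow_eq_one hnm hm hz).mp ?_
    linear_combination hM - hN
  rw [hz1, one_pow, CharTwo.add_self_eq_zero, zero_add] at hN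
  exact one_ne_zero hN

theorem sq_add_self_add_one_ne_zero_of_pow_eq_one (hk : Even k) (hz : z ^ (2 ^ k + 1) = 1) :
    z ^ 2 + z + 1 ≠ 0 := by
  intro hP
  have h3 : z ^ 3 = 1 := by
    linear_combination (norm := ring_nf) (z + 1) * hP
    simp [CharTwo.two_eq_zero]
  have hcop : Nat.Coprime 3 (2 ^ k + 1) := by
    rw [Nat.Prime.coprime_iff_not_dvd Nat.prime_three]
    obtain ⟨j, rfl⟩ := hk
    have : 2 ^ (j + j) % 3 = 1 := by rw [← two_mul, pow_mul, Nat.pow_mod]; norm_num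
    omega
  have hz1 : z = 1 := by simpa [hcop] using pow_gcd_eq_one.mpr ⟨h3, hz⟩
  rw [hz1, one_pow, CharTwo.add_self_eq_zero, zero_add] at hP
  exact one_ne_zero hP

theorem eq_of_ratio_eq_of_pow_eq_one (hnm : n * ℓ = m * k) (hm : Odd m)
    (hz : z ^ (2 ^ k + 1) = 1) (hx : x ^ (2 ^ k + 1) = 1)
    (h : (z ^ (2 ^ ℓ + 1) + z ^ 2 ^ ℓ + 1) * (x ^ (2 ^ ℓ + 1) + x + 1) =
      (x ^ (2 ^ ℓ + 1) + x ^ 2 ^ ℓ + 1) * (z ^ (2 ^ ℓ + 1) + z + 1)) :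
    z = x := by
  have hself {y : F} (hy : y ^ (2 ^ k + 1) = 1)
      (h1 : (1 + 1 + 1) * (y ^ (2 ^ ℓ + 1) + y + 1) =
        (y ^ (2 ^ ℓ + 1) + y ^ 2 ^ ℓ + 1) * (1 + 1 + 1)) :
      y = 1 := by
    refine (pow_two_pow_eq_self_iff_of_pow_eq_one hnm hm hy).mp ?_
    linear_combination (norm := ring_nf) -h1
    simp [CharTwo.two_eq_zero]
  rcases eq_or_ne z 1 with rfl | hz1
  · simp only [one_pow] at h
    exact (hself hx h).symm
  rcases eq_or_ne x 1 with rfl | hx1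
  · simp only [one_pow] at h
    exact hself hz h.symm
  obtain ⟨w, hw, hzw⟩ := exists_pow_two_pow_eq_add_one_of_pow_eq_one hz hz1
  obtain ⟨v, hv, hxv⟩ := exists_pow_two_pow_eq_add_one_of_pow_eq_one hx hx1
  have hwv : w = v := by
    refine eq_of_ratio_eq_of_pow_two_pow_eq_add_one hnm hm hw hv ?_
    rw [← CharTwo.pow_two_pow_add_self_mul_of_mul_eq_add_one hzw,
      ← CharTwo.pow_two_pow_add_self_mul_of_mul_eq_add_one hxv,
      ← CharTwo.trinomial_mul_of_mul_eq_add_one hzw, ← CharTwo.trinomial_mul_of_mul_eq_add_one hxv]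
    linear_combination (norm := ring_nf) (w ^ (2 ^ ℓ + 1) * v ^ (2 ^ ℓ + 1)) * h
    simp [CharTwo.two_eq_zero]
  have hw0 : w ≠ 0 := by rintro rfl; simp at hzw
  subst hwv
  exact mul_right_cancel₀ hw0 (hzw.trans hxv.symm)

end UnitCircle

section Permutation

open Polynomial

variable {F : Type*} [Field F] {k ℓ r : ℕ} {B : F[X]} {z : F}

theorem eval_mul_sq_add_self_add_one (hB : B * (X ^ 2 + X + 1) = X ^ (2 ^ ℓ + 1) + X + 1) (z : F) :
    B.eval z * (z ^ 2 + z + 1) = z ^ (2 ^ ℓ + 1) + z + 1 := by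
  simpa using congrArg (eval z) hB

theorem pow_mul_eval_pow_two_pow_mul (hB : B * (X ^ 2 + X + 1) = X ^ (2 ^ ℓ + 1) + X + 1)
    (hmod : r ≡ 2 ^ ℓ - 1 [MOD 2 ^ k + 1]) (hz : z ^ (2 ^ k + 1) = 1) :
    z ^ r * B.eval (z ^ 2 ^ k) * (z ^ 2 + z + 1) = z ^ (2 ^ ℓ + 1) + z ^ 2 ^ ℓ + 1 := by
  have hzr : z ^ r * z ^ 2 = z ^ (2 ^ ℓ + 1) := by
    have hfin : IsOfFinOrder z := isOfFinOrder_iff_pow_eq_one.mpr ⟨_, by positivity, hz⟩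
    rw [hfin.pow_eq_pow_iff_modEq.mpr (hmod.of_dvd (orderOf_dvd_of_pow_eq_one hz)), ← pow_add]
    congr 1
    have := @Nat.one_le_two_pow ℓ
    omega
  have hu : z ^ 2 ^ k * z = 1 := by rw [← pow_succ, hz]
  calc z ^ r * B.eval (z ^ 2 ^ k) * (z ^ 2 + z + 1)
      = z ^ r * z ^ 2 * (B.eval (z ^ 2 ^ k) * ((z ^ 2 ^ k) ^ 2 + z ^ 2 ^ k + 1)) := by
        linear_combination -(z ^ r * B.eval (z ^ 2 ^ k)) * (z ^ 2 ^ k * z + 1 + z) * hu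
    _ = z ^ (2 ^ ℓ + 1) * ((z ^ 2 ^ k) ^ (2 ^ ℓ + 1) + z ^ 2 ^ k + 1) := by
        rw [hzr, eval_mul_sq_add_self_add_one hB]
    _ = (z ^ 2 ^ k * z) ^ (2 ^ ℓ + 1) + z ^ 2 ^ ℓ * (z ^ 2 ^ k * z) + z ^ (2 ^ ℓ + 1) := by ring
    _ = z ^ (2 ^ ℓ + 1) + z ^ 2 ^ ℓ + 1 := by rw [hu, one_pow, mul_one]; ring

variable [CharP F 2]

theorem eval_pow_two_pow_of_pow_eq_one (hk : Even k)
    (hB : B * (X ^ 2 + X + 1) = X ^ (2 ^ ℓ + 1) + X + 1) (hz : z ^ (2 ^ k + 1) = 1) :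
    B.eval z ^ 2 ^ k = B.eval (z ^ 2 ^ k) := by
  have hzk : (z ^ 2 ^ k) ^ (2 ^ k + 1) = 1 := by rw [pow_right_comm, hz, one_pow]
  refine mul_right_cancel₀ (sq_add_self_add_one_ne_zero_of_pow_eq_one hk hzk) ?_
  rw [eval_mul_sq_add_self_add_one hB, ← CharTwo.trinomial_pow_two_pow,
    ← CharTwo.trinomial_pow_two_pow, ← mul_pow, eval_mul_sq_add_self_add_one hB]

theorem pow_two_pow_mul_trinomial_eq (hk : Even k)
    (hB : B * (X ^ 2 + X + 1) = X ^ (2 ^ ℓ + 1) + X + 1) (hmod : r ≡ 2 ^ ℓ - 1 [MOD 2 ^ k + 1])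
    (hz : z ^ (2 ^ k + 1) = 1) {c : F} (hcz : c ^ 2 ^ k = z * c) :
    (c ^ r * B.eval z) ^ 2 ^ k * (z ^ (2 ^ ℓ + 1) + z + 1) =
      c ^ r * B.eval z * (z ^ (2 ^ ℓ + 1) + z ^ 2 ^ ℓ + 1) := by
  refine mul_right_cancel₀ (sq_add_self_add_one_ne_zero_of_pow_eq_one hk hz) ?_
  rw [mul_pow, ← pow_mul, mul_comm r, pow_mul, hcz, mul_pow,
    eval_pow_two_pow_of_pow_eq_one hk hB hz]
  linear_combination (c ^ r * (z ^ (2 ^ ℓ + 1) + z + 1)) * pow_mul_eval_pow_two_pow_mul hB hmod hz -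
    (c ^ r * (z ^ (2 ^ ℓ + 1) + z ^ 2 ^ ℓ + 1)) * eval_mul_sq_add_self_add_one hB z

theorem ratio_eq_of_pow_mul_eval_eq (hk : Even k)
    (hB : B * (X ^ 2 + X + 1) = X ^ (2 ^ ℓ + 1) + X + 1) (hmod : r ≡ 2 ^ ℓ - 1 [MOD 2 ^ k + 1])
    {x c d : F} (hz : z ^ (2 ^ k + 1) = 1) (hx : x ^ (2 ^ k + 1) = 1)
    (hcz : c ^ 2 ^ k = z * c) (hdx : d ^ 2 ^ k = x * d)
    (hd : d ^ r * B.eval x ≠ 0) (hcd : c ^ r * B.eval z = d ^ r * B.eval x) :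
    (z ^ (2 ^ ℓ + 1) + z ^ 2 ^ ℓ + 1) * (x ^ (2 ^ ℓ + 1) + x + 1) =
      (x ^ (2 ^ ℓ + 1) + x ^ 2 ^ ℓ + 1) * (z ^ (2 ^ ℓ + 1) + z + 1) := by
  have hc' := pow_two_pow_mul_trinomial_eq hk hB hmod hz hcz
  have hd' := pow_two_pow_mul_trinomial_eq hk hB hmod hx hdx
  rw [hcd] at hc'
  refine mul_left_cancel₀ hd ?_
  linear_combination (z ^ (2 ^ ℓ + 1) + z + 1) * hd' - (x ^ (2 ^ ℓ + 1) + x + 1) * hc'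

end Permutation

theorem stmt_11_general (k ℓ : ℕ) (hk : 0 < k) (hl : 0 < ℓ) (hke : Even k)
    (hord : padicValNat 2 ℓ ≤ padicValNat 2 k)
    (q Q : ℕ) (hq : q = 2 ^ k) (hQ : Q = 2 ^ ℓ)
    (F : Type) [Field F] [Fintype F] (hF : Fintype.card F = q ^ 2)
    (B : Polynomial F)
    (hB : B * (Polynomial.X ^ 2 + Polynomial.X + 1) =
      Polynomial.X ^ (Q + 1) + Polynomial.X + 1)
    (r : ℕ) (hr : 0 < r) (hrq : Nat.gcd r (q - 1) = 1)
    (hmod : r ≡ Q - 1 [MOD q + 1]) :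
    Function.Bijective (fun c : F => c ^ r * B.eval (c ^ (q - 1))) := by
  subst hq hQ
  have : CharP F 2 := charP_of_card_eq_prime_pow (hF.trans (pow_mul 2 k 2).symm)
  obtain ⟨n, m, hm, hnm⟩ := Nat.exists_mul_eq_odd_mul_of_padicValNat_le hk.ne' hl.ne' hord
  have hμ (c : F) (hc : c ≠ 0) : (c ^ (2 ^ k - 1)) ^ (2 ^ k + 1) = 1 := by
    rw [← pow_mul, mul_comm, ← Nat.sq_sub_sq, one_pow, ← hF]
    exact FiniteField.pow_card_sub_one_eq_one c hc
  have hcz (c : F) : c ^ 2 ^ k = c ^ (2 ^ k - 1) * c := by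
    rw [← pow_succ, Nat.sub_add_cancel Nat.one_le_two_pow]
  have hB0 (c : F) (hc : c ≠ 0) : B.eval (c ^ (2 ^ k - 1)) ≠ 0 := fun h0 =>
    trinomial_ne_zero_of_pow_eq_one_s11 hnm hm (hμ c hc)
      (by rw [← eval_mul_sq_add_self_add_one hB, h0, zero_mul])
  have hf0 (c : F) : c ^ r * B.eval (c ^ (2 ^ k - 1)) = 0 ↔ c = 0 :=
    ⟨fun h => by_contra fun hc => mul_ne_zero (pow_ne_zero r hc) (hB0 c hc) h,
      fun h => by rw [h, zero_pow hr.ne', zero_mul]⟩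
  rw [← Finite.injective_iff_bijective]
  intro c d hcd
  dsimp only at hcd
  rcases eq_or_ne d 0 with rfl | hd
  · exact (hf0 c).mp (hcd.trans ((hf0 0).mpr rfl))
  have hy : d ^ r * B.eval (d ^ (2 ^ k - 1)) ≠ 0 := (hf0 d).not.mpr hd
  have hc : c ≠ 0 := by rintro rfl; exact hy (hcd.symm.trans ((hf0 0).mpr rfl))
  have hzx : c ^ (2 ^ k - 1) = d ^ (2 ^ k - 1) :=
    eq_of_ratio_eq_of_pow_eq_one hnm hm (hμ c hc) (hμ d hd)
      (ratio_eq_of_pow_mul_eval_eq hke hB hmod (hμ c hc) (hμ d hd) (hcz c) (hcz d) hy hcd)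
  refine eq_of_pow_eq_of_pow_eq_of_coprime hrq hd ?_ hzx
  exact mul_right_cancel₀ (hB0 d hd) (hzx ▸ hcd)

/-- Corollary 5.2, case (4.1): with `B(X) = (X^{Q+1}+X+1)/(X²+X+1)`, the polynomial
`X^r B(X^{q-1})` is a permutation polynomial of `F_{q²}`. -/
theorem stmt_11 (k ℓ : ℕ) (hk : 0 < k) (hl : 0 < ℓ) (hke : Even k) (hle : Even ℓ)
    (hord : padicValNat 2 ℓ ≤ padicValNat 2 k)
    (q Q : ℕ) (hq : q = 2 ^ k) (hQ : Q = 2 ^ ℓ)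
    (F : Type) [Field F] [Fintype F] (hF : Fintype.card F = q ^ 2)
    (B : Polynomial F)
    (hB : B * (Polynomial.X ^ 2 + Polynomial.X + 1) =
      Polynomial.X ^ (Q + 1) + Polynomial.X + 1)
    (r : ℕ) (hr : 0 < r) (hrq : Nat.gcd r (q - 1) = 1)
    (hmod : r ≡ Q - 1 [MOD q + 1]) :
    Function.Bijective (fun c : F => c ^ r * B.eval (c ^ (q - 1))) :=
  stmt_11_general k ℓ hk hl hke hord q Q hq hQ F hF B hB r hr hrq hmod
end
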